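/- arXiv:1202.5012 — 6 statements merged into one kernel-verified Lean document; each statement's English description precedes it below -/
import Mathlib

section
/- For all natural numbers x and y, the point (x,y) belongs to the discrete Sierpinski triangle S_△ if and only if the binary expansions of x and y share no common 1 bit, i.e. Nat.land x y = 0. -/
/-- The `i`-th stage of the discrete Sierpinski triangle:
`S_0 = {(0,0)}`, `S_{i+1} = S_i ∪ (S_i + 2^i·V)` with `V = {(1,0),(0,1)}`. -/
def sierpStage : ℕ → Set (ℕ × ℕ)
  | 0 => {(0, 0)}
  | i + 1 => sierpStage i ∪
      {p | ∃ m ∈ sierpStage i, ∃ n ∈ ({(1, 0), (0, 1)} : Set (ℕ × ℕ)), p = m + (2 ^ i) • n}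

/-- The discrete Sierpinski triangle `S_△ = ⋃ i, S_i`. -/
def sierpinski : Set (ℕ × ℕ) := ⋃ i, sierpStage i

/-!
By induction on `i`, the stage `S_i` consists of the pairs `(x, y)` with `x, y < 2 ^ i` and
`x &&& y = 0`. Passing from `S_i` to `S_{i+1}` adds the bit `2 ^ i` to at most one coordinate,
and `2 ^ i` does not meet the bits of a number below `2 ^ i`; conversely, if
`x &&& y = 0` then bit `i` is set in at most one of `x, y < 2 ^ (i + 1)`.
-/

namespace Nat

theorem land_eq_mod_two_pow_land {x b i : ℕ} (hb : b < 2 ^ i) :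
    x &&& b = x % 2 ^ i &&& b :=
  calc x &&& b = (x &&& b) % 2 ^ i := (mod_eq_of_lt (and_lt_two_pow x hb)).symm
    _ = x % 2 ^ i &&& b := by rw [and_mod_two_pow, mod_eq_of_lt hb]

theorem add_two_pow_land_of_lt {x b i : ℕ} (hb : b < 2 ^ i) :
    (x + 2 ^ i) &&& b = x &&& b := by
  rw [land_eq_mod_two_pow_land hb, land_eq_mod_two_pow_land (x := x) hb, add_mod_right]

theorem lt_two_pow_of_land_eq_zero {x y i : ℕ} (h : x &&& y = 0) (hix : 2 ^ i ≤ x)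
    (hx : x < 2 ^ (i + 1)) (hy : y < 2 ^ (i + 1)) : y < 2 ^ i := by
  by_contra! hiy
  have hbit : (x &&& y).testBit i = true := by
    rw [testBit_and, testBit_of_two_pow_le_and_two_pow_add_one_gt hix hx,
      testBit_of_two_pow_le_and_two_pow_add_one_gt hiy hy, Bool.and_self]
  simp [h] at hbit

theorem land_eq_zero_and_lt_two_pow_succ_iff {x y i : ℕ} :
    x &&& y = 0 ∧ x < 2 ^ (i + 1) ∧ y < 2 ^ (i + 1) ↔ (x &&& y = 0 ∧ x < 2 ^ i ∧ y < 2 ^ i) ∨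
      (∃ a, (a &&& y = 0 ∧ a < 2 ^ i ∧ y < 2 ^ i) ∧ x = a + 2 ^ i) ∨
      (∃ b, (x &&& b = 0 ∧ x < 2 ^ i ∧ b < 2 ^ i) ∧ y = b + 2 ^ i) := by
  have hpow : 2 ^ (i + 1) = 2 ^ i + 2 ^ i := by ring
  constructor
  · rintro ⟨hxy, hx, hy⟩
    rcases lt_or_ge x (2 ^ i) with hxi | hix
    · rcases lt_or_ge y (2 ^ i) with hyi | hiy
      · exact .inl ⟨hxy, hxi, hyi⟩
      · obtain ⟨b, rfl⟩ := Nat.exists_eq_add_of_le' hiy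
        rw [land_comm, add_two_pow_land_of_lt hxi, land_comm] at hxy
        exact .inr (.inr ⟨b, ⟨hxy, hxi, by omega⟩, rfl⟩)
    · have hyi := lt_two_pow_of_land_eq_zero hxy hix hx hy
      obtain ⟨a, rfl⟩ := Nat.exists_eq_add_of_le' hix
      rw [add_two_pow_land_of_lt hyi] at hxy
      exact .inr (.inl ⟨a, ⟨hxy, by omega, hyi⟩, rfl⟩)
  · rintro (⟨hxy, hx, hy⟩ | ⟨a, ⟨hay, ha, hy⟩, rfl⟩ | ⟨b, ⟨hxb, hx, hb⟩, rfl⟩)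
    · exact ⟨hxy, by omega, by omega⟩
    · exact ⟨by rwa [add_two_pow_land_of_lt hy], by omega, by omega⟩
    · exact ⟨by rwa [land_comm, add_two_pow_land_of_lt hx, land_comm], by omega, by omega⟩

end Nat

theorem mem_sierpStage_succ {i x y : ℕ} :
    (x, y) ∈ sierpStage (i + 1) ↔ (x, y) ∈ sierpStage i ∨
      (∃ a, (a, y) ∈ sierpStage i ∧ x = a + 2 ^ i) ∨
      (∃ b, (x, b) ∈ sierpStage i ∧ y = b + 2 ^ i) := by
  refine or_congr_right ⟨?_, ?_⟩
  · rintro ⟨⟨a, b⟩, hab, n, rfl | rfl, heq⟩ <;>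
      obtain ⟨rfl, rfl⟩ : x = _ ∧ y = _ := by simpa [Prod.ext_iff] using heq
    exacts [.inl ⟨a, hab, rfl⟩, .inr ⟨b, hab, rfl⟩]
  · rintro (⟨a, ha, rfl⟩ | ⟨b, hb, rfl⟩)
    exacts [⟨(a, y), ha, (1, 0), by simp, by simp⟩, ⟨(x, b), hb, (0, 1), by simp, by simp⟩]

theorem mem_sierpStage_iff {i x y : ℕ} :
    (x, y) ∈ sierpStage i ↔ x &&& y = 0 ∧ x < 2 ^ i ∧ y < 2 ^ i := by
  induction i generalizing x y with
  | zero =>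
    simp only [sierpStage, Set.mem_singleton_iff, Prod.mk.injEq, pow_zero, Nat.lt_one_iff]
    exact ⟨fun ⟨hx, hy⟩ => ⟨by simp [hx], hx, hy⟩, fun h => h.2⟩
  | succ i ih =>
    simp only [mem_sierpStage_succ, ih, Nat.land_eq_zero_and_lt_two_pow_succ_iff]

/-- A point `(x,y)` lies in the discrete Sierpinski triangle iff the binary
expansions of `x` and `y` share no common `1` bit. -/
theorem sierpinski_iff_land_eq_zero (x y : ℕ) :
    (x, y) ∈ sierpinski ↔ Nat.land x y = 0 := by
  rw [sierpinski, Set.mem_iUnion]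
  refine ⟨fun ⟨i, hi⟩ => (mem_sierpStage_iff.mp hi).1, fun h => ⟨x + y, ?_⟩⟩
  have hxy : x + y < 2 ^ (x + y) := Nat.lt_two_pow_self
  exact mem_sierpStage_iff.mpr ⟨h, by omega, by omega⟩
end

section
/- For every natural number i, the i-th stage of the discrete Sierpinski triangle satisfies S_i = {(x,y) ∈ ℕ×ℕ : Nat.land x y = 0 and x + y < 2^i}. -/
private lemma land_eq_zero_iff' (a b : ℕ) :
    Nat.land a b = 0 ↔ ∀ k, (a.testBit k && b.testBit k) = false := by
  have : Nat.land a b = a &&& b := rfl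
  rw [this]
  constructor
  · intro h k
    have := congrArg (fun n => Nat.testBit n k) h
    simpa [Nat.testBit_land] using this
  · intro h
    apply Nat.eq_of_testBit_eq
    intro k
    simp [Nat.testBit_land, h k]

private lemma testBit_two_pow_add' {m i : ℕ} (hm : m < 2 ^ i) (k : ℕ) :
    (2 ^ i + m).testBit k = ((k == i) || m.testBit k) := by
  rcases lt_trichotomy k i with h | rfl | h
  · rw [Nat.testBit_two_pow_add_gt h]
    simp [Nat.ne_of_lt h]
  · rw [Nat.testBit_two_pow_add_eq]
    simp [Nat.testBit_lt_two_pow hm]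
  · have hle : (2:ℕ) ^ (i + 1) ≤ 2 ^ k := Nat.pow_le_pow_right (by norm_num) h
    have hik : (2:ℕ) ^ i ≤ 2 ^ k := Nat.pow_le_pow_right (by norm_num) h.le
    have h1 : 2 ^ i + m < 2 ^ k := by
      have : (2:ℕ) ^ (i + 1) = 2 ^ i + 2 ^ i := by ring
      omega
    have h2 : m < 2 ^ k := by omega
    have hne : (k == i) = false := by simp [Nat.ne_of_gt h]
    rw [Nat.testBit_lt_two_pow h1, Nat.testBit_lt_two_pow h2, hne]
    rfl

/-- If the binary expansions of `m1` and `m2` are disjoint and both are `< 2^i`,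
then adding `2^i` to `m1` keeps them disjoint. -/
private lemma land_add_left {m1 m2 i : ℕ} (h : Nat.land m1 m2 = 0)
    (hm1 : m1 < 2 ^ i) (hm2 : m2 < 2 ^ i) : Nat.land (2 ^ i + m1) m2 = 0 := by
  rw [land_eq_zero_iff'] at h ⊢
  intro k
  rw [testBit_two_pow_add' hm1]
  by_cases hk : k = i
  · subst hk
    simp [Nat.testBit_lt_two_pow hm2]
  · have hne : (k == i) = false := by simp [hk]
    simp [hne, h k]

/-- If the binary expansions of `x` and `y` are disjoint and `2^i ≤ x < 2^(i+1)`,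
then removing the top bit of `x` keeps them disjoint. -/
private lemma land_sub_left {x y i : ℕ} (h : Nat.land x y = 0)
    (h1 : 2 ^ i ≤ x) (h2 : x < 2 ^ (i + 1)) : Nat.land (x - 2 ^ i) y = 0 := by
  have hx' : x - 2 ^ i < 2 ^ i := by
    have : (2:ℕ) ^ (i + 1) = 2 ^ i + 2 ^ i := by ring
    omega
  rw [land_eq_zero_iff'] at h ⊢
  intro k
  have hk := h k
  rw [show x = 2 ^ i + (x - 2 ^ i) by omega, testBit_two_pow_add' hx'] at hk
  cases hb : (x - 2 ^ i).testBit k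
  · simp
  · simp only [hb, Bool.or_true, Bool.true_and] at hk
    simp [hk]

private lemma land_comm' (a b : ℕ) : Nat.land a b = Nat.land b a := Nat.land_comm a b

/-- Top bit of a number in `[2^i, 2^(i+1))` is set. -/
private lemma testBit_of_ge {x i : ℕ} (h1 : 2 ^ i ≤ x) (h2 : x < 2 ^ (i + 1)) :
    x.testBit i = true := by
  have hx' : x - 2 ^ i < 2 ^ i := by
    have : (2:ℕ) ^ (i + 1) = 2 ^ i + 2 ^ i := by ring
    omega
  rw [show x = 2 ^ i + (x - 2 ^ i) by omega, testBit_two_pow_add' hx']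
  simp

private lemma sum_lt_of_land_eq_zero (i : ℕ) :
    ∀ x y : ℕ, Nat.land x y = 0 → x < 2 ^ i → y < 2 ^ i → x + y < 2 ^ i := by
  induction i with
  | zero => intro x y _ hx hy; omega
  | succ i ih =>
    have hps : (2:ℕ) ^ (i + 1) = 2 ^ i + 2 ^ i := by ring
    intro x y h hx hy
    by_cases hxi : x < 2 ^ i
    · by_cases hyi : y < 2 ^ i
      · have := ih x y h hxi hyi
        omega
      · push_neg at hyi
        have h' : Nat.land (y - 2 ^ i) x = 0 :=
          land_sub_left (land_comm' x y ▸ h) hyi hy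
        have := ih x (y - 2 ^ i) (land_comm' (y - 2 ^ i) x ▸ h') hxi (by omega)
        omega
    · push_neg at hxi
      have hbx : x.testBit i = true := testBit_of_ge hxi hx
      have hby : y.testBit i = false := by
        have hk := (land_eq_zero_iff' x y).1 h i
        rw [hbx] at hk
        simpa using hk
      have hyi : y < 2 ^ i := by
        by_contra hc
        push_neg at hc
        rw [testBit_of_ge hc hy] at hby
        simp at hby
      have h' : Nat.land (x - 2 ^ i) y = 0 := land_sub_left h hxi hx
      have := ih (x - 2 ^ i) y h' (by omega) hyi
      omega

/-- The `i`-th stage is exactly the set of points `(x,y)` with disjoint binary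
expansions and `x + y < 2^i`. -/
theorem sierpStage_eq (i : ℕ) :
    sierpStage i = {p : ℕ × ℕ | Nat.land p.1 p.2 = 0 ∧ p.1 + p.2 < 2 ^ i} := by
  induction i with
  | zero =>
    ext ⟨x, y⟩
    simp only [sierpStage, Set.mem_singleton_iff, Set.mem_setOf_eq, pow_zero, Prod.mk.injEq]
    constructor
    · rintro ⟨rfl, rfl⟩; exact ⟨rfl, by omega⟩
    · rintro ⟨-, h⟩; omega
  | succ i ih =>
    have hps : (2:ℕ) ^ (i + 1) = 2 ^ i + 2 ^ i := by ring
    ext ⟨x, y⟩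
    simp only [sierpStage, ih, Set.mem_union, Set.mem_setOf_eq, Set.mem_insert_iff,
      Set.mem_singleton_iff]
    constructor
    · rintro (⟨h0, hlt⟩ | ⟨⟨m1, m2⟩, ⟨hm0, hmlt⟩, n, hn, heq⟩)
      · exact ⟨h0, by omega⟩
      · simp only at hm0 hmlt
        rcases hn with rfl | rfl
        · simp only [Prod.smul_mk, smul_eq_mul, mul_one, mul_zero, Prod.mk_add_mk, add_zero,
            Prod.mk.injEq] at heq
          obtain ⟨h1, h2⟩ := heq
          rw [h1, h2]
          refine ⟨?_, by omega⟩
          rw [add_comm]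
          exact land_add_left hm0 (by omega) (by omega)
        · simp only [Prod.smul_mk, smul_eq_mul, mul_one, mul_zero, Prod.mk_add_mk, add_zero,
            Prod.mk.injEq] at heq
          obtain ⟨h1, h2⟩ := heq
          rw [h1, h2]
          refine ⟨?_, by omega⟩
          rw [add_comm m2, land_comm']
          exact land_add_left (land_comm' m1 m2 ▸ hm0) (by omega) (by omega)
    · rintro ⟨h0, hlt⟩
      by_cases hsm : x + y < 2 ^ i
      · exact Or.inl ⟨h0, hsm⟩
      · push_neg at hsm
        by_cases hx : 2 ^ i ≤ x
        · right
          have hx2 : x < 2 ^ (i + 1) := by omega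
          refine ⟨(x - 2 ^ i, y), ⟨land_sub_left h0 hx hx2, by omega⟩, (1, 0), by simp, ?_⟩
          simp only [Prod.smul_mk, smul_eq_mul, mul_one, mul_zero, Prod.mk_add_mk, add_zero,
            Prod.mk.injEq]
          exact ⟨by omega, trivial⟩
        · by_cases hy : 2 ^ i ≤ y
          · right
            have hy2 : y < 2 ^ (i + 1) := by omega
            refine ⟨(x, y - 2 ^ i), ⟨?_, by omega⟩, (0, 1), by simp, ?_⟩
            · exact land_comm' (y - 2 ^ i) x ▸ land_sub_left (land_comm' x y ▸ h0) hy hy2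
            · simp only [Prod.smul_mk, smul_eq_mul, mul_one, mul_zero, Prod.mk_add_mk, add_zero,
                Prod.mk.injEq]
              exact ⟨trivial, by omega⟩
          · exfalso
            push_neg at hx hy
            have := sum_lt_of_land_eq_zero i x y h0 hx hy
            omega
end

section
/- The discrete Sierpinski triangle S_△ is 4-connected: for every point (x,y) ∈ S_△ there exists a finite sequence of points of S_△ starting at (0,0) and ending at (x,y) in which consecutive points differ by exactly 1 in exactly one coordinate. (This connectivity is required for S_△, and its scaled version, to be a shape that strictly self-assembles.) -/
/-- Two points of `ℕ × ℕ` are 4-adjacent if they differ by exactly `1` in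
exactly one coordinate. -/
def FourAdj (p q : ℕ × ℕ) : Prop :=
  (p.1 = q.1 ∧ (p.2 + 1 = q.2 ∨ q.2 + 1 = p.2)) ∨
  (p.2 = q.2 ∧ (p.1 + 1 = q.1 ∨ q.1 + 1 = p.1))

/-!
Induction on the stage. `S_{i+1}` is `S_i` together with the two translates `S_i + 2^i•v`,
`v ∈ V`. Each translate is connected (a translated copy of the connected `S_i`), and its
corner `2^i•v` is 4-adjacent to the point `(2^i - 1)•v`, which already lies in `S_i`.
-/

/-- Reachability by 4-adjacent steps inside `S`; the starting point itself need not lie in `S`. -/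
def FourReach (S : Set (ℕ × ℕ)) : ℕ × ℕ → ℕ × ℕ → Prop :=
  Relation.ReflTransGen fun x y => FourAdj x y ∧ y ∈ S

lemma fourAdj_add_right {p q : ℕ × ℕ} (v : ℕ × ℕ) (h : FourAdj p q) :
    FourAdj (p + v) (q + v) := by
  obtain ⟨p1, p2⟩ := p; obtain ⟨q1, q2⟩ := q; obtain ⟨v1, v2⟩ := v
  simp only [FourAdj, Prod.mk_add_mk] at *
  omega

namespace FourReach

variable {S T : Set (ℕ × ℕ)} {a b : ℕ × ℕ}

lemma mono (hST : S ⊆ T) (h : FourReach S a b) : FourReach T a b :=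
  Relation.ReflTransGen.mono (fun _ _ hxy => ⟨hxy.1, hST hxy.2⟩) _ _ h

lemma add_right (v : ℕ × ℕ) (hST : ∀ q ∈ S, q + v ∈ T) (h : FourReach S a b) :
    FourReach T (a + v) (b + v) :=
  Relation.ReflTransGen.lift (· + v) (fun _ _ hxy => ⟨fourAdj_add_right v hxy.1, hST _ hxy.2⟩)
    _ _ h

lemma exists_chain (ha : a ∈ S) (h : FourReach S a b) :
    ∃ l : List (ℕ × ℕ), l.head? = some a ∧ l.getLast? = some b ∧
      (∀ q ∈ l, q ∈ S) ∧ l.IsChain FourAdj := by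
  obtain ⟨l, hchain, hlast⟩ := List.exists_isChain_cons_of_relationReflTransGen h
  refine ⟨a :: l, rfl, ?_, ?_, hchain.imp fun _ _ hxy => hxy.1⟩
  · rw [List.getLast?_eq_some_getLast (List.cons_ne_nil _ _), hlast]
  · exact hchain.induction (· ∈ S) _ (fun _ _ hxy _ => hxy.2) fun _ => ha

end FourReach

lemma fourAdj_pred_smul {n : ℕ × ℕ} (hn : n ∈ ({(1, 0), (0, 1)} : Set (ℕ × ℕ))) {k : ℕ}
    (hk : 0 < k) : FourAdj ((k - 1) • n) (k • n) := by
  rcases hn with rfl | rfl <;> simp only [FourAdj, Prod.smul_mk, smul_eq_mul] <;> omega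

lemma sierpStage_subset_succ (i : ℕ) : sierpStage i ⊆ sierpStage (i + 1) :=
  Set.subset_union_left

lemma zero_mem_sierpStage : ∀ i, ((0, 0) : ℕ × ℕ) ∈ sierpStage i
  | 0 => rfl
  | i + 1 => sierpStage_subset_succ i (zero_mem_sierpStage i)

lemma add_pow_smul_mem_sierpStage_succ {i : ℕ} {m n : ℕ × ℕ} (hm : m ∈ sierpStage i)
    (hn : n ∈ ({(1, 0), (0, 1)} : Set (ℕ × ℕ))) : m + 2 ^ i • n ∈ sierpStage (i + 1) :=
  Or.inr ⟨m, hm, n, hn, rfl⟩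

lemma pred_pow_smul_mem_sierpStage {n : ℕ × ℕ} (hn : n ∈ ({(1, 0), (0, 1)} : Set (ℕ × ℕ))) :
    ∀ i, (2 ^ i - 1) • n ∈ sierpStage i
  | 0 => by rw [pow_zero, Nat.sub_self, zero_smul]; rfl
  | i + 1 => by
    have h : (2 ^ (i + 1) - 1) • n = (2 ^ i - 1) • n + 2 ^ i • n := by
      rw [← add_smul, pow_succ]
      congr 1
      have := Nat.one_le_two_pow (n := i)
      omega
    exact h ▸ add_pow_smul_mem_sierpStage_succ (pred_pow_smul_mem_sierpStage hn i) hn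

lemma fourReach_sierpStage : ∀ {i : ℕ} {p : ℕ × ℕ}, p ∈ sierpStage i →
    FourReach (sierpStage i) (0, 0) p
  | 0, _, rfl => Relation.ReflTransGen.refl
  | i + 1, _, Or.inl hp => (fourReach_sierpStage hp).mono (sierpStage_subset_succ i)
  | i + 1, _, Or.inr ⟨m, hm, n, hn, rfl⟩ => by
    have corner : FourReach (sierpStage (i + 1)) (0, 0) ((2 ^ i - 1) • n) :=
      (fourReach_sierpStage (pred_pow_smul_mem_sierpStage hn i)).mono (sierpStage_subset_succ i)
    have step : FourAdj ((2 ^ i - 1) • n) (2 ^ i • n) :=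
      fourAdj_pred_smul hn (Nat.two_pow_pos i)
    have hcorner : 2 ^ i • n ∈ sierpStage (i + 1) := by
      simpa [Prod.mk_zero_zero] using add_pow_smul_mem_sierpStage_succ (zero_mem_sierpStage i) hn
    have shifted : FourReach (sierpStage (i + 1)) (2 ^ i • n) (m + 2 ^ i • n) := by
      simpa [Prod.mk_zero_zero] using (fourReach_sierpStage hm).add_right (2 ^ i • n)
        fun q hq => add_pow_smul_mem_sierpStage_succ hq hn
    exact (corner.tail ⟨step, hcorner⟩).trans shifted

/-- The discrete Sierpinski triangle is 4-connected: every point of `S_△` is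
joined to `(0,0)` by a finite path of 4-adjacent points of `S_△`. -/
theorem sierpinski_fourConnected (p : ℕ × ℕ) (hp : p ∈ sierpinski) :
    ∃ l : List (ℕ × ℕ), l.head? = some (0, 0) ∧ l.getLast? = some p ∧
      (∀ q ∈ l, q ∈ sierpinski) ∧ l.Chain' FourAdj := by
  obtain ⟨i, hpi⟩ := Set.mem_iUnion.1 hp
  exact ((fourReach_sierpStage hpi).mono (Set.subset_iUnion sierpStage i)).exists_chain
    (Set.mem_iUnion_of_mem 0 (zero_mem_sierpStage 0))
end

section
/- Every 'white region' of the discrete Sierpinski triangle is finite and surrounded by points of S_△: for every point p ∈ (ℕ×ℕ) \ S_△, the set of points q ∈ (ℕ×ℕ) \ S_△ reachable from p by a finite sequence of 4-adjacent steps all of which stay inside (ℕ×ℕ) \ S_△ is a finite set. -/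
/-- One 4-adjacent step staying inside the complement of `S_△`. -/
def OutsideStep (p q : ℕ × ℕ) : Prop :=
  FourAdj p q ∧ p ∉ sierpinski ∧ q ∉ sierpinski

/-!
The anti-diagonal `x + y = 2 ^ n - 1` lies entirely in the stage `S_n`. A 4-adjacent step changes
`x + y` by exactly one, so a path in the complement of `S_△` starting below such an anti-diagonal
can never reach it, and stays in the finite triangle below it.
-/

theorem mem_sierpStage_of_add_eq {n x y : ℕ} (h : x + y = 2 ^ n - 1) :
    (x, y) ∈ sierpStage n := by
  induction n generalizing x y with
  | zero =>
    obtain ⟨rfl, rfl⟩ : x = 0 ∧ y = 0 := by omega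
    rfl
  | succ n ih =>
    have hpow : 2 ^ (n + 1) = 2 ^ n + 2 ^ n := by ring
    have hpos : 0 < 2 ^ n := by positivity
    right
    rcases le_or_gt (2 ^ n) x with hx | hx
    · refine ⟨(x - 2 ^ n, y), ih (by omega), (1, 0), .inl rfl, ?_⟩
      simp only [Prod.smul_mk, smul_eq_mul, Prod.mk_add_mk, Prod.mk.injEq]
      omega
    · refine ⟨(x, y - 2 ^ n), ih (by omega), (0, 1), .inr rfl, ?_⟩
      simp only [Prod.smul_mk, smul_eq_mul, Prod.mk_add_mk, Prod.mk.injEq]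
      omega

theorem mem_sierpinski_of_add_eq {n x y : ℕ} (h : x + y = 2 ^ n - 1) : (x, y) ∈ sierpinski :=
  Set.mem_iUnion.2 ⟨n, mem_sierpStage_of_add_eq h⟩

theorem FourAdj.add_le_add_succ {p q : ℕ × ℕ} (h : FourAdj p q) :
    q.1 + q.2 ≤ p.1 + p.2 + 1 := by
  unfold FourAdj at h
  omega

/-- A quantity that grows by at most one per step cannot jump over a value it never takes. -/
theorem Relation.ReflTransGen.lt_of_forall_step {α : Type*} {r : α → α → Prop}
    {f : α → ℕ} {c : ℕ} {a b : α} (h : ReflTransGen r a b) (ha : f a < c)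
    (hstep : ∀ x y, r x y → f y ≤ f x + 1 ∧ f y ≠ c) : f b < c := by
  induction h with
  | refl => exact ha
  | tail _ hxy ih =>
    obtain ⟨hle, hne⟩ := hstep _ _ hxy
    omega

theorem finite_setOf_add_lt (c : ℕ) : {q : ℕ × ℕ | q.1 + q.2 < c}.Finite :=
  (Set.finite_Iic (c, c)).subset fun q (hq : q.1 + q.2 < c) => ⟨by omega, by omega⟩

theorem sierpinski_white_regions_finite_general (p : ℕ × ℕ) :
    {q : ℕ × ℕ | Relation.ReflTransGen OutsideStep p q}.Finite := by
  set n := p.1 + p.2 + 1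
  have hp : p.1 + p.2 < 2 ^ n - 1 := by
    have := n.lt_two_pow_self
    omega
  refine (finite_setOf_add_lt (2 ^ n - 1)).subset fun q hq => ?_
  refine Relation.ReflTransGen.lt_of_forall_step (f := fun q => q.1 + q.2) hq hp ?_
  rintro x y ⟨hxy, -, hy⟩
  exact ⟨hxy.add_le_add_succ, fun h => hy (mem_sierpinski_of_add_eq h)⟩

/-- Every white region of the discrete Sierpinski triangle is finite: the set
of points of the complement of `S_△` reachable from a given point `p` of the
complement by 4-adjacent steps staying in the complement is finite. -/
theorem sierpinski_white_regions_finite (p : ℕ × ℕ) (hp : p ∉ sierpinski) :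
    {q : ℕ × ℕ | Relation.ReflTransGen OutsideStep p q}.Finite :=
  sierpinski_white_regions_finite_general p
end

section
/- The discrete Sierpinski triangle is aperiodic under translation: there is no pair (a,b) ∈ ℕ×ℕ with (a,b) ≠ (0,0) such that for all (x,y) ∈ ℕ×ℕ, (x,y) ∈ S_△ if and only if (x+a, y+b) ∈ S_△. -/
namespace Nat

theorem and_eq_mod_two_pow_and {x y n : ℕ} (hy : y < 2 ^ n) : x &&& y = x % 2 ^ n &&& y := by
  calc x &&& y = (x &&& y) % 2 ^ n := (Nat.mod_eq_of_lt (Nat.and_lt_two_pow x hy)).symm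
    _ = x % 2 ^ n &&& y := by rw [Nat.and_mod_two_pow, Nat.mod_eq_of_lt hy]

theorem add_two_pow_and_of_lt {x y n : ℕ} (hy : y < 2 ^ n) : (x + 2 ^ n) &&& y = x &&& y := by
  rw [and_eq_mod_two_pow_and hy, Nat.add_mod_right, ← and_eq_mod_two_pow_and hy]

theorem exists_and_add_ne_zero {a : ℕ} (ha : a ≠ 0) (b : ℕ) : ∃ y, a &&& (y + b) ≠ 0 := by
  have hlt {c : ℕ} (hc : c ≤ a + b) : c < 2 ^ (a + b) :=
    c.lt_two_pow_self.trans_le (Nat.pow_le_pow_right two_pos hc)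
  refine ⟨2 ^ (a + b) - 1 - b, ?_⟩
  rwa [Nat.sub_add_cancel (by have := hlt (c := b) (by omega); omega),
    Nat.and_two_pow_sub_one_of_lt_two_pow (hlt (by omega))]

end Nat

theorem and_eq_zero_and_lt_of_mem_sierpStage {i : ℕ} {p : ℕ × ℕ} (hp : p ∈ sierpStage i) :
    p.1 &&& p.2 = 0 ∧ p.1 + p.2 < 2 ^ i := by
  induction i generalizing p with
  | zero => simp_all [sierpStage]
  | succ i ih =>
    have hpow : 2 ^ (i + 1) = 2 ^ i + 2 ^ i := by ring
    rcases hp with hp | ⟨m, hm, n, hn, rfl⟩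
    · exact ⟨(ih hp).1, by have := (ih hp).2; omega⟩
    obtain ⟨hand, hlt⟩ := ih hm
    rcases hn with rfl | rfl <;>
      simp only [Prod.fst_add, Prod.snd_add, Prod.smul_mk, smul_eq_mul, mul_one, mul_zero,
        add_zero]
    · exact ⟨by rw [Nat.add_two_pow_and_of_lt (by omega), hand], by omega⟩
    · exact ⟨by rw [Nat.and_comm, Nat.add_two_pow_and_of_lt (by omega), Nat.and_comm, hand],
        by omega⟩

theorem and_eq_zero_of_mem_sierpinski {x y : ℕ} (h : (x, y) ∈ sierpinski) : x &&& y = 0 := by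
  obtain ⟨i, hi⟩ := Set.mem_iUnion.1 h
  exact (and_eq_zero_and_lt_of_mem_sierpStage hi).1

theorem smul_mem_sierpStage {n : ℕ × ℕ} (hn : n ∈ ({(1, 0), (0, 1)} : Set (ℕ × ℕ))) {i k : ℕ}
    (hk : k < 2 ^ i) : k • n ∈ sierpStage i := by
  induction i generalizing k with
  | zero => simp_all [sierpStage, Prod.zero_eq_mk]
  | succ i ih =>
    by_cases hki : k < 2 ^ i
    · exact Or.inl (ih hki)
    · have hpow : 2 ^ (i + 1) = 2 ^ i + 2 ^ i := by ring
      refine Or.inr ⟨(k - 2 ^ i) • n, ih (by omega), n, hn, ?_⟩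
      rw [← add_smul, Nat.sub_add_cancel (by omega)]

theorem mk_zero_mem_sierpinski (x : ℕ) : (x, 0) ∈ sierpinski :=
  Set.mem_iUnion.2 ⟨x, by simpa using smul_mem_sierpStage (n := (1, 0)) (by simp) x.lt_two_pow_self⟩

theorem zero_mk_mem_sierpinski (y : ℕ) : (0, y) ∈ sierpinski :=
  Set.mem_iUnion.2 ⟨y, by simpa using smul_mem_sierpStage (n := (0, 1)) (by simp) y.lt_two_pow_self⟩

/-- The discrete Sierpinski triangle is aperiodic under translation: no
nonzero translation vector `(a,b)` preserves membership in `S_△`. -/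
theorem sierpinski_aperiodic :
    ¬ ∃ a b : ℕ, (a, b) ≠ ((0 : ℕ), (0 : ℕ)) ∧
      ∀ x y : ℕ, ((x, y) ∈ sierpinski ↔ (x + a, y + b) ∈ sierpinski) := by
  rintro ⟨a, b, hab, hper⟩
  have htrans {x y : ℕ} (h : (x, y) ∈ sierpinski) : (x + a) &&& (y + b) = 0 :=
    and_eq_zero_of_mem_sierpinski ((hper x y).1 h)
  by_cases ha : a = 0
  · have hb : b ≠ 0 := by rintro rfl; exact hab (by rw [ha])
    obtain ⟨x, hx⟩ := Nat.exists_and_add_ne_zero hb a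
    exact hx (by simpa [Nat.and_comm] using htrans (mk_zero_mem_sierpinski x))
  · obtain ⟨y, hy⟩ := Nat.exists_and_add_ne_zero ha b
    exact hy (by simpa using htrans (zero_mk_mem_sierpinski y))
end

section
/- Setting k = log n / (log log n − log log log n) makes the glue count k + n^{1/k} of the counter-based line construction O(log n / log log n): there exist a constant C > 0 and a threshold N such that for every natural number n ≥ N, writing L = log n (natural logarithm), LL = log L, LLL = log LL, and k = L / (LL − LLL) (a positive real for n ≥ N), one has k + (n : ℝ)^(1/k) ≤ C · L / LL. -/
/-! With `k = L / (LL - LLL)` the second term is exact: `n ^ (1 / k) = exp (LL - LLL) = L / LL`.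
Since `log y ≤ y / 2`, the denominator `LL - LLL` is at least `LL / 2`, so `k ≤ 2 L / LL` and
`C = 3` works as soon as `log log n > 1`. -/

open Real Filter

namespace Real

lemma log_le_div_exp_one {y : ℝ} (hy : 0 ≤ y) : log y ≤ y / exp 1 := by
  rcases hy.eq_or_lt with rfl | hy
  · simp
  have := log_le_sub_one_of_pos (div_pos hy (exp_pos 1))
  rw [log_div hy.ne' (exp_pos 1).ne', log_exp] at this
  linarith

lemma log_le_half_self {y : ℝ} (hy : 0 ≤ y) : log y ≤ y / 2 :=
  (log_le_div_exp_one hy).trans <|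
    div_le_div_of_nonneg_left hy two_pos (by linarith [add_one_le_exp (1 : ℝ)])

lemma rpow_one_div_div_log {x : ℝ} (hx : 0 < x) (hlog : log x ≠ 0) (d : ℝ) :
    x ^ (1 / (log x / d)) = exp d := by
  rw [rpow_def_of_pos hx, one_div_div, mul_div_cancel₀ _ hlog]

lemma div_sub_log_le_two_mul_div {L ℓ : ℝ} (hL : 0 ≤ L) (hℓ : 0 < ℓ) :
    L / (ℓ - log ℓ) ≤ 2 * L / ℓ := by
  have hhalf := log_le_half_self hℓ.le
  calc L / (ℓ - log ℓ) ≤ L / (ℓ / 2) := div_le_div_of_nonneg_left hL (by linarith) (by linarith)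
    _ = 2 * L / ℓ := by field_simp

end Real

lemma eventually_one_lt_log_log_natCast :
    ∀ᶠ n : ℕ in atTop, 1 < log (log n) :=
  (tendsto_log_atTop.comp <| tendsto_log_atTop.comp tendsto_natCast_atTop_atTop)
    |>.eventually_gt_atTop 1

/-- Choosing `k = log n / (log log n − log log log n)` makes the glue count
`k + n^(1/k)` of the counter-based line construction `O(log n / log log n)`. -/
theorem glue_count_bound :
    ∃ C : ℝ, 0 < C ∧ ∃ N : ℕ, ∀ n : ℕ, N ≤ n →
      let L := Real.log n
      let LL := Real.log L
      let LLL := Real.log LL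
      let k := L / (LL - LLL)
      0 < L ∧ 0 < LL ∧ 0 < LLL ∧ 0 < LL - LLL ∧
        k + (n : ℝ) ^ (1 / k) ≤ C * L / LL := by
  obtain ⟨N, hN⟩ := eventually_atTop.mp eventually_one_lt_log_log_natCast
  refine ⟨3, three_pos, N, fun n hNn => ?_⟩
  intro L LL LLL k
  have hLL : 1 < LL := hN n hNn
  have hL : 1 < L := (log_pos_iff (log_natCast_nonneg n)).mp (zero_lt_one.trans hLL)
  have hn1 : (1 : ℝ) < n := (log_pos_iff n.cast_nonneg).mp (zero_lt_one.trans hL)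
  have hLLL : 0 < LLL := log_pos hLL
  have hgap : 0 < LL - LLL := by linarith [log_le_half_self (zero_le_one.trans hLL.le)]
  refine ⟨zero_lt_one.trans hL, by linarith, hLLL, hgap, ?_⟩
  have hpow : (n : ℝ) ^ (1 / k) = L / LL := by
    rw [rpow_one_div_div_log (zero_lt_one.trans hn1) (by linarith), exp_sub,
      exp_log (by linarith), exp_log (by linarith)]
  have hk : k ≤ 2 * L / LL := div_sub_log_le_two_mul_div (by linarith) (by linarith)
  rw [hpow]
  linarith [show 2 * L / LL + L / LL = 3 * L / LL by ring]
end
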